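/- arXiv:1402.3640 — 3 statements merged into one kernel-verified Lean document; each statement's English description precedes it below -/
import Mathlib

section
/- Let σ ∈ C¹([0,1]) with σ ≥ 0, let χ ∈ C^∞([0,1]) with χ = 1 on [δ,1], χ = 0 on [0, δ/2], 0 ≤ χ ≤ 1, and let i ≥ 2 be an integer. Then for all h ∈ C¹ with σh, σ^{1/2}h, σh' ∈ L²(0,1) and h(x) bounded near x=1, one has ‖χσh'‖²_{L²} + ‖χσ'h‖²_{L²} ≤ ‖χ(σh' + iσ'h)‖²_{L²} + C‖σ^{1/2}h‖²_{L²}, where C depends only on i, δ, and bounds on σ, σ', σ''. -/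
open MeasureTheory

/-- Boundary coercivity estimate (inequality (7.41)₁ of the paper): for the cut-off `χ`
(`χ = 1` on `[δ,1]`, `χ = 0` on `[0,δ/2]`, `0 ≤ χ ≤ 1`), `σ ≥ 0` with `σ(1) = 0`, and any
integer `i ≥ 2`, one has
`‖χσh'‖² + ‖χσ'h‖² ≤ ‖χ(σh' + iσ'h)‖² + C‖σ^{1/2}h‖²` for all `h ∈ C¹([0,1])`,
with `C` depending only on `i`, `δ` and bounds on `σ, σ', σ''`. -/
theorem stmt10 (δ : ℝ) (hδ : 0 < δ) (hδ1 : δ ≤ 1)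
    (σ σ' σ'' χ : ℝ → ℝ) (i : ℕ) (hi : 2 ≤ i)
    (hσd : ∀ x ∈ Set.Icc (0 : ℝ) 1, HasDerivAt σ (σ' x) x)
    (hσd2 : ∀ x ∈ Set.Icc (0 : ℝ) 1, HasDerivAt σ' (σ'' x) x)
    (hσc : ContinuousOn σ'' (Set.Icc 0 1))
    (hσ0 : ∀ x ∈ Set.Icc (0 : ℝ) 1, 0 ≤ σ x) (hσ1 : σ 1 = 0)
    (hχ : ContDiff ℝ (⊤ : ℕ∞) χ)
    (hχ1 : ∀ x ∈ Set.Icc δ 1, χ x = 1)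
    (hχ0 : ∀ x ∈ Set.Icc (0 : ℝ) (δ / 2), χ x = 0)
    (hχb : ∀ x, 0 ≤ χ x ∧ χ x ≤ 1) :
    ∃ C : ℝ, 0 < C ∧ ∀ h h' : ℝ → ℝ,
      (∀ x ∈ Set.Icc (0 : ℝ) 1, HasDerivAt h (h' x) x) →
      ContinuousOn h' (Set.Icc 0 1) →
      (∫ x in Set.Ioo (0 : ℝ) 1, (χ x * σ x * h' x) ^ 2) +
          (∫ x in Set.Ioo (0 : ℝ) 1, (χ x * σ' x * h x) ^ 2) ≤
        (∫ x in Set.Ioo (0 : ℝ) 1, (χ x * (σ x * h' x + (i : ℝ) * σ' x * h x)) ^ 2) +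
          C * ∫ x in Set.Ioo (0 : ℝ) 1, σ x * (h x) ^ 2 := by
  classical
  set χ' : ℝ → ℝ := deriv χ with hχ'def
  have cχ : Continuous χ := hχ.continuous
  have cχ' : Continuous χ' := hχ.continuous_deriv (by simp)
  have hχd : ∀ x : ℝ, HasDerivAt χ (χ' x) x := fun x => (hχ.differentiable (by simp) x).hasDerivAt
  have cσ : ContinuousOn σ (Set.Icc 0 1) := fun x hx => ((hσd x hx).continuousAt).continuousWithinAt
  have cσ' : ContinuousOn σ' (Set.Icc 0 1) := fun x hx => ((hσd2 x hx).continuousAt).continuousWithinAt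
  set φ : ℝ → ℝ := fun x => 2 * χ x * χ' x * σ' x + χ x ^ 2 * σ'' x with hφdef
  have cφ : ContinuousOn φ (Set.Icc 0 1) :=
    ((((continuous_const.mul cχ).mul cχ').continuousOn.mul cσ').add
      (((cχ.pow 2).continuousOn).mul hσc))
  obtain ⟨M, hM⟩ := isCompact_Icc.exists_bound_of_continuousOn cφ
  have hM0 : 0 ≤ M := le_trans (norm_nonneg _) (hM 0 ⟨le_refl 0, by norm_num⟩)
  refine ⟨(i : ℝ) * M + 1, by positivity, ?_⟩
  intro h h' hhd hch'
  have ch : ContinuousOn h (Set.Icc 0 1) := fun x hx => ((hhd x hx).continuousAt).continuousWithinAt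
  have intOn : ∀ f : ℝ → ℝ, ContinuousOn f (Set.Icc 0 1) → IntegrableOn f (Set.Ioo 0 1) volume :=
    fun f hf => hf.integrableOn_Icc.mono_set Set.Ioo_subset_Icc_self
  set f2 : ℝ → ℝ := fun x => (χ x * σ x * h' x) ^ 2 with hf2
  set f3 : ℝ → ℝ := fun x => (χ x * σ' x * h x) ^ 2 with hf3
  set f1 : ℝ → ℝ := fun x => (χ x * (σ x * h' x + (i : ℝ) * σ' x * h x)) ^ 2 with hf1
  set f6 : ℝ → ℝ := fun x => σ x * h x ^ 2 with hf6
  set f4 : ℝ → ℝ := fun x => χ x ^ 2 * σ x * σ' x * (h x * h' x) with hf4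
  set f7 : ℝ → ℝ := fun x => φ x * f6 x with hf7
  have cf2 : ContinuousOn f2 (Set.Icc 0 1) := ((cχ.continuousOn.mul cσ).mul hch').pow 2
  have cf3 : ContinuousOn f3 (Set.Icc 0 1) := ((cχ.continuousOn.mul cσ').mul ch).pow 2
  have cf1 : ContinuousOn f1 (Set.Icc 0 1) :=
    (cχ.continuousOn.mul ((cσ.mul hch').add ((continuousOn_const.mul cσ').mul ch))).pow 2
  have cf6 : ContinuousOn f6 (Set.Icc 0 1) := cσ.mul (ch.pow 2)
  have cf4 : ContinuousOn f4 (Set.Icc 0 1) :=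
    ((((cχ.pow 2).continuousOn).mul cσ).mul cσ').mul (ch.mul hch')
  have cf7 : ContinuousOn f7 (Set.Icc 0 1) := cφ.mul cf6
  have if2 := intOn f2 cf2
  have if3 := intOn f3 cf3
  have if4 := intOn f4 cf4
  have if6 := intOn f6 cf6
  have if7 := intOn f7 cf7
  -- FTC / integration by parts
  have hFTC : (∫ x in Set.Ioo (0:ℝ) 1, (f3 x + f7 x + 2 * f4 x)) = 0 := by
    have hderiv : ∀ x ∈ Set.uIcc (0:ℝ) 1,
        HasDerivAt (fun x => χ x ^ 2 * σ x * σ' x * h x ^ 2) (f3 x + f7 x + 2 * f4 x) x := by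
      intro x hx
      rw [Set.uIcc_of_le (by norm_num : (0:ℝ) ≤ 1)] at hx
      have h1 : HasDerivAt (fun x => χ x ^ 2) (2 * χ x * χ' x) x := by
        simpa [mul_comm, mul_assoc, mul_left_comm] using (hχd x).fun_pow 2
      have h2 := (h1.fun_mul (hσd x hx)).fun_mul (hσd2 x hx)
      have h4 : HasDerivAt (fun x => h x ^ 2) (2 * h x * h' x) x := by
        simpa [mul_comm, mul_assoc, mul_left_comm] using (hhd x hx).fun_pow 2
      have h5 := h2.fun_mul h4
      refine h5.congr_deriv ?_
      simp only [hf3, hf7, hf4, hf6, hφdef]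
      ring
    have hint : IntervalIntegrable (fun x => f3 x + f7 x + 2 * f4 x) volume 0 1 := by
      apply ContinuousOn.intervalIntegrable
      rw [Set.uIcc_of_le (by norm_num : (0:ℝ) ≤ 1)]
      exact (cf3.add cf7).add (continuousOn_const.mul cf4)
    have hi0 := intervalIntegral.integral_eq_sub_of_hasDerivAt hderiv hint
    have hχ00 : χ 0 = 0 := hχ0 0 ⟨le_refl 0, by linarith⟩
    rw [intervalIntegral.integral_of_le (by norm_num : (0:ℝ) ≤ 1),
      integral_Ioc_eq_integral_Ioo] at hi0
    rw [hi0, hσ1, hχ00]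
    ring
  have hsum : (∫ x in Set.Ioo (0:ℝ) 1, f3 x) + (∫ x in Set.Ioo (0:ℝ) 1, f7 x)
      + 2 * (∫ x in Set.Ioo (0:ℝ) 1, f4 x) = 0 := by
    have i37 : IntegrableOn (fun x => f3 x + f7 x) (Set.Ioo 0 1) volume := if3.add if7
    rw [integral_add i37 (if4.const_mul 2), integral_add if3 if7, integral_const_mul] at hFTC
    linarith
  -- expansion of the square
  have hexp : (∫ x in Set.Ioo (0:ℝ) 1, f1 x)
      = (∫ x in Set.Ioo (0:ℝ) 1, f2 x) + (i:ℝ)^2 * (∫ x in Set.Ioo (0:ℝ) 1, f3 x)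
        + 2 * (i:ℝ) * (∫ x in Set.Ioo (0:ℝ) 1, f4 x) := by
    have hpt : f1 = fun x => f2 x + ((i:ℝ)^2 * f3 x + 2 * (i:ℝ) * f4 x) := by
      funext x
      simp only [hf1, hf2, hf3, hf4]
      ring
    have i34 : IntegrableOn (fun x => (i:ℝ)^2 * f3 x + 2 * (i:ℝ) * f4 x) (Set.Ioo 0 1) volume :=
      (if3.const_mul _).add (if4.const_mul _)
    rw [hpt, integral_add if2 i34,
      integral_add (if3.const_mul ((i:ℝ)^2)) (if4.const_mul (2*(i:ℝ))), integral_const_mul,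
      integral_const_mul]
    ring
  have hf3nn : 0 ≤ ∫ x in Set.Ioo (0:ℝ) 1, f3 x :=
    setIntegral_nonneg measurableSet_Ioo (fun x _ => by simp only [hf3]; positivity)
  have hf6nn : 0 ≤ ∫ x in Set.Ioo (0:ℝ) 1, f6 x :=
    setIntegral_nonneg measurableSet_Ioo
      (fun x hx => mul_nonneg (hσ0 x (Set.Ioo_subset_Icc_self hx)) (sq_nonneg _))
  have hf7le : (∫ x in Set.Ioo (0:ℝ) 1, f7 x) ≤ M * ∫ x in Set.Ioo (0:ℝ) 1, f6 x := by
    rw [← integral_const_mul]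
    apply setIntegral_mono_on if7 (if6.const_mul M) measurableSet_Ioo
    intro x hx
    have hb : |φ x| ≤ M := by
      have := hM x (Set.Ioo_subset_Icc_self hx)
      simpa [Real.norm_eq_abs] using this
    have h6 : 0 ≤ f6 x :=
      mul_nonneg (hσ0 x (Set.Ioo_subset_Icc_self hx)) (sq_nonneg _)
    exact mul_le_mul_of_nonneg_right (le_trans (le_abs_self _) hb) h6
  have hi2 : (2:ℝ) ≤ (i:ℝ) := by exact_mod_cast hi
  have h4v : (∫ x in Set.Ioo (0:ℝ) 1, f4 x)
      = (-(∫ x in Set.Ioo (0:ℝ) 1, f3 x) - (∫ x in Set.Ioo (0:ℝ) 1, f7 x)) / 2 := by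
    linarith
  have key1 : 0 ≤ ((i:ℝ)^2 - (i:ℝ) - 1) * ∫ x in Set.Ioo (0:ℝ) 1, f3 x :=
    mul_nonneg (by nlinarith) hf3nn
  have key2 : 0 ≤ (i:ℝ) * (M * (∫ x in Set.Ioo (0:ℝ) 1, f6 x) - ∫ x in Set.Ioo (0:ℝ) 1, f7 x) :=
    mul_nonneg (by linarith) (by linarith)
  rw [hexp, h4v]
  nlinarith [key1, key2, hf6nn]
end

section
/- Let σ ∈ C²([0,1]) with σ(1) = 0, σ ≥ 0, and χ as above, i ≥ 1 an integer with i ≥ 2 for the first term. Then ‖χσ^{3/2}h'‖²_{L²} + ‖χσ^{1/2}σ'h‖²_{L²} ≤ 4‖χσ^{1/2}(σh' + iσ'h)‖²_{L²} + C‖σh‖²_{L²} for all smooth h, where C depends only on i, δ, and bounds on σ, σ', σ''. -/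
open MeasureTheory

/-- Boundary coercivity estimate (inequality (7.41)₂ of the paper): with `σ ∈ C²([0,1])`,
`σ ≥ 0`, `σ(1) = 0`, cut-off `χ` as before, and integer `i ≥ 2` (≥ 1 suffices for the
second term), one has
`‖χσ^{3/2}h'‖² + ‖χσ^{1/2}σ'h‖² ≤ 4‖χσ^{1/2}(σh' + iσ'h)‖² + C‖σh‖²` for all `h ∈ C¹`,
with `C` depending only on `i`, `δ` and bounds on `σ, σ', σ''`. -/
theorem stmt11 (δ : ℝ) (hδ : 0 < δ) (hδ1 : δ ≤ 1)
    (σ σ' σ'' χ : ℝ → ℝ) (i : ℕ) (hi : 2 ≤ i)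
    (hσd : ∀ x ∈ Set.Icc (0 : ℝ) 1, HasDerivAt σ (σ' x) x)
    (hσd2 : ∀ x ∈ Set.Icc (0 : ℝ) 1, HasDerivAt σ' (σ'' x) x)
    (hσc : ContinuousOn σ'' (Set.Icc 0 1))
    (hσ0 : ∀ x ∈ Set.Icc (0 : ℝ) 1, 0 ≤ σ x) (hσ1 : σ 1 = 0)
    (hχ : ContDiff ℝ (⊤ : ℕ∞) χ)
    (hχ1 : ∀ x ∈ Set.Icc δ 1, χ x = 1)
    (hχ0 : ∀ x ∈ Set.Icc (0 : ℝ) (δ / 2), χ x = 0)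
    (hχb : ∀ x, 0 ≤ χ x ∧ χ x ≤ 1) :
    ∃ C : ℝ, 0 < C ∧ ∀ h h' : ℝ → ℝ,
      (∀ x ∈ Set.Icc (0 : ℝ) 1, HasDerivAt h (h' x) x) →
      ContinuousOn h' (Set.Icc 0 1) →
      (∫ x in Set.Ioo (0 : ℝ) 1, (χ x) ^ 2 * (σ x) ^ 3 * (h' x) ^ 2) +
          (∫ x in Set.Ioo (0 : ℝ) 1, (χ x) ^ 2 * σ x * (σ' x * h x) ^ 2) ≤
        4 * (∫ x in Set.Ioo (0 : ℝ) 1,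
              (χ x) ^ 2 * σ x * (σ x * h' x + (i : ℝ) * σ' x * h x) ^ 2) +
          C * ∫ x in Set.Ioo (0 : ℝ) 1, (σ x * h x) ^ 2 := by
  have hσcont : ContinuousOn σ (Set.Icc 0 1) :=
    fun x hx => (hσd x hx).continuousAt.continuousWithinAt
  have hσ'cont : ContinuousOn σ' (Set.Icc 0 1) :=
    fun x hx => (hσd2 x hx).continuousAt.continuousWithinAt
  set χ' := deriv χ with hχ'def
  have hχd : ∀ x, HasDerivAt χ (χ' x) x :=
    fun x => (hχ.differentiable (by simp) x).hasDerivAt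
  have hχc : Continuous χ := hχ.continuous
  have hχ'c : Continuous χ' := hχ.continuous_deriv (by simp)
  -- the error term coefficient
  set g : ℝ → ℝ := fun x => (i : ℝ) * (2 * χ x * χ' x * σ' x + χ x ^ 2 * σ'' x) with hgdef
  have hgcont : ContinuousOn g (Set.Icc 0 1) := by
    apply ContinuousOn.mul continuousOn_const
    exact (((continuousOn_const.mul hχc.continuousOn).mul hχ'c.continuousOn).mul
      hσ'cont).add ((hχc.continuousOn.pow 2).mul hσc)
  obtain ⟨C₀, hC₀⟩ := isCompact_Icc.exists_bound_of_continuousOn hgcont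
  have hC₀0 : 0 ≤ C₀ := le_trans (norm_nonneg _) (hC₀ 0 (by norm_num))
  refine ⟨3 / 2 * C₀ + 1, by positivity, ?_⟩
  intro h h' hh hh'c
  have hhcont : ContinuousOn h (Set.Icc 0 1) :=
    fun x hx => (hh x hx).continuousAt.continuousWithinAt
  have hms : MeasurableSet (Set.Ioo (0:ℝ) 1) := measurableSet_Ioo
  -- integrability helper
  have integr : ∀ f : ℝ → ℝ, ContinuousOn f (Set.Icc 0 1) →
      IntegrableOn f (Set.Ioo (0:ℝ) 1) := fun f hf =>
    hf.integrableOn_Icc.mono_set Set.Ioo_subset_Icc_self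
  set fA : ℝ → ℝ := fun x => (χ x) ^ 2 * (σ x) ^ 3 * (h' x) ^ 2 with hfA
  set fB : ℝ → ℝ := fun x => (χ x) ^ 2 * σ x * (σ' x * h x) ^ 2 with hfB
  set fM : ℝ → ℝ := fun x =>
    (χ x) ^ 2 * σ x * (σ x * h' x + (i : ℝ) * σ' x * h x) ^ 2 with hfM
  set fJ : ℝ → ℝ := fun x => (σ x * h x) ^ 2 with hfJ
  have hAc : ContinuousOn fA (Set.Icc 0 1) :=
    ((hχc.continuousOn.pow 2).mul (hσcont.pow 3)).mul (hh'c.pow 2)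
  have hBc : ContinuousOn fB (Set.Icc 0 1) :=
    ((hχc.continuousOn.pow 2).mul hσcont).mul ((hσ'cont.mul hhcont).pow 2)
  have hMc : ContinuousOn fM (Set.Icc 0 1) :=
    ((hχc.continuousOn.pow 2).mul hσcont).mul
      (((hσcont.mul hh'c).add ((continuousOn_const.mul hσ'cont).mul hhcont)).pow 2)
  have hJc : ContinuousOn fJ (Set.Icc 0 1) := (hσcont.mul hhcont).pow 2
  have hAi := integr fA hAc
  have hBi := integr fB hBc
  have hMi := integr fM hMc
  have hJi := integr fJ hJc
  have hgJi : IntegrableOn (fun x => g x * fJ x) (Set.Ioo (0:ℝ) 1) :=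
    integr _ (hgcont.mul hJc)
  -- integration by parts: F' integrates to zero
  set F : ℝ → ℝ := fun x => χ x ^ 2 * σ x ^ 2 * σ' x * h x ^ 2 with hFdef
  set F' : ℝ → ℝ := fun x =>
    ((2 * χ x * χ' x * σ x ^ 2 + χ x ^ 2 * (2 * σ x * σ' x)) * σ' x
      + χ x ^ 2 * σ x ^ 2 * σ'' x) * h x ^ 2
      + χ x ^ 2 * σ x ^ 2 * σ' x * (2 * h x * h' x) with hF'def
  have hF'c : ContinuousOn F' (Set.Icc 0 1) := by
    apply ContinuousOn.add
    · apply ContinuousOn.mul _ (hhcont.pow 2)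
      apply ContinuousOn.add _ (((hχc.continuousOn.pow 2).mul (hσcont.pow 2)).mul hσc)
      apply ContinuousOn.mul _ hσ'cont
      exact (((continuousOn_const.mul hχc.continuousOn).mul hχ'c.continuousOn).mul
        (hσcont.pow 2)).add ((hχc.continuousOn.pow 2).mul
        ((continuousOn_const.mul hσcont).mul hσ'cont))
    · exact (((hχc.continuousOn.pow 2).mul (hσcont.pow 2)).mul hσ'cont).mul
        ((continuousOn_const.mul hhcont).mul hh'c)
  have hF'i := integr F' hF'c
  have hFd : ∀ x ∈ Set.Icc (0:ℝ) 1, HasDerivAt F (F' x) x := by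
    intro x hx
    have d := ((((hχd x).pow 2).mul ((hσd x hx).pow 2)).mul (hσd2 x hx)).mul
      ((hh x hx).pow 2)
    refine d.congr_deriv ?_
    simp only [Pi.pow_apply, Pi.mul_apply, hF'def]
    push_cast
    ring
  have hFTC : ∫ x in (0:ℝ)..1, F' x = F 1 - F 0 := by
    apply intervalIntegral.integral_eq_sub_of_hasDerivAt
    · intro x hx
      exact hFd x (by rwa [Set.uIcc_of_le (by norm_num : (0:ℝ) ≤ 1)] at hx)
    · exact (hF'c.mono (by rw [Set.uIcc_of_le (by norm_num : (0:ℝ) ≤ 1)])).intervalIntegrable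
  have hF1 : F 1 = 0 := by simp [hFdef, hσ1]
  have hF0 : F 0 = 0 := by
    have : χ 0 = 0 := hχ0 0 ⟨le_rfl, by positivity⟩
    simp [hFdef, this]
  have hF'0 : ∫ x in Set.Ioo (0:ℝ) 1, F' x = 0 := by
    rw [← MeasureTheory.integral_Ioc_eq_integral_Ioo,
      ← intervalIntegral.integral_of_le (by norm_num : (0:ℝ) ≤ 1), hFTC, hF1, hF0, sub_zero]
  -- the pointwise algebraic identity
  set c : ℝ := (i : ℝ) * ((i : ℝ) - 2) with hcdef
  have hc0 : 0 ≤ c := by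
    have : (2:ℝ) ≤ (i:ℝ) := by exact_mod_cast hi
    have : (0:ℝ) ≤ (i:ℝ) - 2 := by linarith
    positivity
  have hpt : ∀ x, fA x + (c * fB x + (i:ℝ) * F' x) = fM x + g x * fJ x := by
    intro x
    simp only [hfA, hfB, hfM, hfJ, hF'def, hgdef, hcdef]
    ring
  have key : (∫ x in Set.Ioo (0:ℝ) 1, fA x) + c * ∫ x in Set.Ioo (0:ℝ) 1, fB x
      = (∫ x in Set.Ioo (0:ℝ) 1, fM x) + ∫ x in Set.Ioo (0:ℝ) 1, g x * fJ x := by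
    have e1 : ∫ x in Set.Ioo (0:ℝ) 1, (fA x + (c * fB x + (i:ℝ) * F' x))
        = (∫ x in Set.Ioo (0:ℝ) 1, fA x) + (c * (∫ x in Set.Ioo (0:ℝ) 1, fB x)
          + (i:ℝ) * ∫ x in Set.Ioo (0:ℝ) 1, F' x) := by
      have hg1 : IntegrableOn (fun x => c * fB x + (i:ℝ) * F' x) (Set.Ioo (0:ℝ) 1) :=
        (hBi.const_mul c).add (hF'i.const_mul (i:ℝ))
      rw [integral_add hAi hg1, integral_add (hBi.const_mul c) (hF'i.const_mul (i:ℝ)),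
        integral_const_mul, integral_const_mul]
    have e2 : ∫ x in Set.Ioo (0:ℝ) 1, (fA x + (c * fB x + (i:ℝ) * F' x))
        = ∫ x in Set.Ioo (0:ℝ) 1, (fM x + g x * fJ x) := by
      apply integral_congr_ae
      filter_upwards with x using hpt x
    rw [e2, integral_add hMi hgJi] at e1
    rw [hF'0, mul_zero, add_zero] at e1
    linarith
  -- bound the error term
  have hgJ : (∫ x in Set.Ioo (0:ℝ) 1, g x * fJ x)
      ≤ C₀ * ∫ x in Set.Ioo (0:ℝ) 1, fJ x := by
    rw [← integral_const_mul]
    apply setIntegral_mono_on hgJi (hJi.const_mul C₀) hms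
    intro x hx
    have hb : |g x| ≤ C₀ := by
      have := hC₀ x (Set.Ioo_subset_Icc_self hx)
      simpa [Real.norm_eq_abs] using this
    have hJ0 : 0 ≤ fJ x := sq_nonneg _
    have : g x ≤ C₀ := le_trans (le_abs_self _) hb
    exact mul_le_mul_of_nonneg_right this hJ0 |>.trans_eq rfl
  have hBnn : 0 ≤ ∫ x in Set.Ioo (0:ℝ) 1, fB x := by
    apply setIntegral_nonneg hms
    intro x hx
    have := hσ0 x (Set.Ioo_subset_Icc_self hx)
    simp only [hfB]
    positivity
  have hMnn : 0 ≤ ∫ x in Set.Ioo (0:ℝ) 1, fM x := by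
    apply setIntegral_nonneg hms
    intro x hx
    have := hσ0 x (Set.Ioo_subset_Icc_self hx)
    simp only [hfM]
    positivity
  have hJnn : 0 ≤ ∫ x in Set.Ioo (0:ℝ) 1, fJ x :=
    setIntegral_nonneg hms fun x _ => sq_nonneg _
  -- A ≤ M + C₀ J
  have hA : (∫ x in Set.Ioo (0:ℝ) 1, fA x)
      ≤ (∫ x in Set.Ioo (0:ℝ) 1, fM x) + C₀ * ∫ x in Set.Ioo (0:ℝ) 1, fJ x := by
    nlinarith [mul_nonneg hc0 hBnn]
  -- B ≤ (M + A)/2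
  have hB : (∫ x in Set.Ioo (0:ℝ) 1, fB x)
      ≤ ((∫ x in Set.Ioo (0:ℝ) 1, fM x) + ∫ x in Set.Ioo (0:ℝ) 1, fA x) / 2 := by
    have : (∫ x in Set.Ioo (0:ℝ) 1, fB x)
        ≤ ∫ x in Set.Ioo (0:ℝ) 1, (fM x + fA x) / 2 := by
      apply setIntegral_mono_on hBi ((hMi.add hAi).div_const 2) hms
      intro x hx
      have hs : 0 ≤ σ x := hσ0 x (Set.Ioo_subset_Icc_self hx)
      have hc2 : (0:ℝ) ≤ χ x ^ 2 := sq_nonneg _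
      have hk : (4:ℝ) ≤ (i:ℝ) ^ 2 := by
        have : (2:ℝ) ≤ (i:ℝ) := by exact_mod_cast hi
        nlinarith
      show χ x ^ 2 * σ x * (σ' x * h x) ^ 2 ≤
        (χ x ^ 2 * σ x * (σ x * h' x + (i:ℝ) * σ' x * h x) ^ 2
          + χ x ^ 2 * σ x ^ 3 * h' x ^ 2) / 2
      nlinarith [mul_nonneg (mul_nonneg hc2 hs)
          (sq_nonneg (2 * (σ x * h' x) + (i:ℝ) * (σ' x * h x))),
        mul_nonneg (mul_nonneg hc2 hs)
          (mul_nonneg (by linarith : (0:ℝ) ≤ (i:ℝ)^2 - 4) (sq_nonneg (σ' x * h x)))]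
    calc (∫ x in Set.Ioo (0:ℝ) 1, fB x)
        ≤ ∫ x in Set.Ioo (0:ℝ) 1, (fM x + fA x) / 2 := this
      _ = ((∫ x in Set.Ioo (0:ℝ) 1, fM x) + ∫ x in Set.Ioo (0:ℝ) 1, fA x) / 2 := by
          rw [integral_div, integral_add hMi hAi]
  -- conclude
  simp only [hfA, hfB, hfM, hfJ] at hA hB hMnn hJnn ⊢
  nlinarith [hJnn, hMnn]
end

section
/- Let γ > 1 and D²η, F_j, η as in the Euler system with p(ρ) = ρ^γ. Then for states U₁ = (ρ₁, ρ₁u₁), U₂ = (ρ₂, ρ₂u₂) with ρ₁, ρ₂ > 0, the identity Σⱼ D²η(U₁)(∂ⱼU₁, F_j(U₂) − F_j(U₁) − DF_j(U₁)(U₂ − U₁)) = [p(ρ₂) − p(ρ₁) − p'(ρ₁)(ρ₂ − ρ₁)] div u₁ + (ρ₂/2) Σᵢⱼ (u₂ⁱ − u₁ⁱ)(u₂ʲ − u₁ʲ)(∂ⱼu₁ⁱ + ∂ᵢu₁ʲ) holds pointwise, where ∂ⱼU₁ denotes the spatial derivative of U₁ and the pairing is the bilinear form of the Hessian. -/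
/- Only the momentum component of `F_j(U₂) − F_j(U₁) − DF_j(U₁)(U₂ − U₁)` survives, and it equals
`ρ₂ (u₂ − u₁)ᵢ(u₂ − u₁)ⱼ + [p(ρ₂) − p(ρ₁) − p'(ρ₁)(ρ₂ − ρ₁)] δᵢⱼ`. Against a vector with vanishing
density component, the Hessian of `η` at `U₁ = (ρ₁, ρ₁u₁)` pairs `∂ⱼU₁` as `Σᵢ ∂ⱼu₁ⁱ wᵢ`: the
`∂ⱼρ₁` terms cancel. Summing over `j` and symmetrising in `i, j` gives the identity. -/

/-- The Hessian bilinear form of `η(ρ,m) = |m|²/(2ρ) + ρ^γ/(γ−1)` at the state `(ρ, m)`. -/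
noncomputable def etaHess (γ : ℝ) (ρ : ℝ) (m : Fin 3 → ℝ)
    (V W : ℝ × (Fin 3 → ℝ)) : ℝ :=
  ((∑ i, (m i) ^ 2) / ρ ^ 3 + γ * ρ ^ (γ - 2)) * V.1 * W.1 -
    (1 / ρ ^ 2) * ∑ i, m i * (V.1 * W.2 i + W.1 * V.2 i) +
    (1 / ρ) * ∑ i, V.2 i * W.2 i

/-- The `j`-th Euler flux `F_j(ρ,m) = (m_j, m m_j/ρ + ρ^γ e_j)`. -/
noncomputable def eulerFlux (γ : ℝ) (j : Fin 3) (u : ℝ × (Fin 3 → ℝ)) : ℝ × (Fin 3 → ℝ) :=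
  (u.2 j, fun i => u.2 i * u.2 j / u.1 + u.1 ^ γ * (if i = j then 1 else 0))

lemma fderiv_eulerFlux_apply (γ : ℝ) (j : Fin 3) {ρ : ℝ} (m : Fin 3 → ℝ) (hρ : ρ ≠ 0)
    (V : ℝ × (Fin 3 → ℝ)) :
    fderiv ℝ (eulerFlux γ j) (ρ, m) V =
      (V.2 j, fun i => (V.2 i * m j + m i * V.2 j) / ρ - m i * m j / ρ ^ 2 * V.1
        + γ * ρ ^ (γ - 1) * V.1 * (if i = j then 1 else 0)) := by
  have hfst : HasFDerivAt (fun u : ℝ × (Fin 3 → ℝ) => u.1)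
      (ContinuousLinearMap.fst ℝ ℝ (Fin 3 → ℝ)) (ρ, m) := hasFDerivAt_fst
  have hsnd : ∀ i : Fin 3, HasFDerivAt (fun u : ℝ × (Fin 3 → ℝ) => u.2 i)
      ((ContinuousLinearMap.proj i).comp (ContinuousLinearMap.snd ℝ ℝ (Fin 3 → ℝ))) (ρ, m) :=
    fun i => (ContinuousLinearMap.proj (R := ℝ) (φ := fun _ : Fin 3 => ℝ) i).hasFDerivAt.comp
      (ρ, m) hasFDerivAt_snd
  have hinv := (hasDerivAt_inv hρ).comp_hasFDerivAt (ρ, m) hfst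
  have hflux := ((hsnd j).prodMk (hasFDerivAt_pi.mpr fun i =>
      (((hsnd i).mul (hsnd j)).mul hinv).add
        ((hfst.rpow_const (p := γ) (Or.inl hρ)).mul_const (if i = j then (1 : ℝ) else 0))))
    |>.congr_of_eventuallyEq (f₁ := eulerFlux γ j) (.of_forall fun u => by
      simp only [eulerFlux, div_eq_mul_inv]; rfl)
  rw [hflux.fderiv]
  refine Prod.ext rfl (funext fun i => ?_)
  simp only [Pi.mul_apply, Function.comp_apply, ContinuousLinearMap.prod_apply,
    ContinuousLinearMap.comp_apply, ContinuousLinearMap.coe_snd', ContinuousLinearMap.proj_apply,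
    ContinuousLinearMap.coe_pi', ContinuousLinearMap.coe_fst', add_apply, smul_apply, smul_eq_mul]
  field_simp
  ring

lemma eulerFlux_sub_sub_fderiv (γ : ℝ) (j : Fin 3) {ρ₁ : ℝ} (hρ₁ : 0 < ρ₁) (ρ₂ : ℝ)
    (u₁ u₂ : Fin 3 → ℝ) :
    eulerFlux γ j (ρ₂, fun i => ρ₂ * u₂ i) - eulerFlux γ j (ρ₁, fun i => ρ₁ * u₁ i) -
        fderiv ℝ (eulerFlux γ j) (ρ₁, fun i => ρ₁ * u₁ i)
          ((ρ₂, fun i => ρ₂ * u₂ i) - (ρ₁, fun i => ρ₁ * u₁ i)) =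
      (0, fun i => ρ₂ * (u₂ i - u₁ i) * (u₂ j - u₁ j) +
        (ρ₂ ^ γ - ρ₁ ^ γ - γ * ρ₁ ^ (γ - 1) * (ρ₂ - ρ₁)) * (if i = j then 1 else 0)) := by
  rw [fderiv_eulerFlux_apply γ j _ hρ₁.ne']
  refine Prod.ext (by simp [eulerFlux]) (funext fun i => ?_)
  simp only [eulerFlux, Prod.snd_sub, Prod.fst_sub, Pi.sub_apply]
  rw [Real.rpow_sub hρ₁, Real.rpow_one]
  have hρ₁' := hρ₁.ne'
  split_ifs <;> field_simp <;> ring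

lemma etaHess_gradient_of_fst_eq_zero (γ : ℝ) {ρ : ℝ} (hρ : ρ ≠ 0) (u : Fin 3 → ℝ) (a : ℝ)
    (v w : Fin 3 → ℝ) :
    etaHess γ ρ (fun i => ρ * u i) (a, fun i => ρ * v i + u i * a) (0, w) = ∑ i, v i * w i := by
  simp only [etaHess, Fin.sum_univ_three]
  field_simp
  ring

/-- `Dρ j = ∂ⱼρ₁` and `Du j i = ∂ⱼu₁ⁱ`, so that `∂ⱼU₁ = (∂ⱼρ₁, ρ₁∂ⱼu₁ + u₁∂ⱼρ₁)`. -/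
theorem stmt19_general (γ : ℝ) (ρ₁ ρ₂ : ℝ) (hρ₁ : 0 < ρ₁)
    (u₁ u₂ : Fin 3 → ℝ) (Dρ : Fin 3 → ℝ) (Du : Fin 3 → Fin 3 → ℝ) :
    (∑ j : Fin 3,
        etaHess γ ρ₁ (fun i => ρ₁ * u₁ i)
          ((Dρ j, fun i => ρ₁ * Du j i + u₁ i * Dρ j))
          (eulerFlux γ j (ρ₂, fun i => ρ₂ * u₂ i) -
            eulerFlux γ j (ρ₁, fun i => ρ₁ * u₁ i) -
            fderiv ℝ (eulerFlux γ j) (ρ₁, fun i => ρ₁ * u₁ i)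
              ((ρ₂, fun i => ρ₂ * u₂ i) - (ρ₁, fun i => ρ₁ * u₁ i)))) =
      (ρ₂ ^ γ - ρ₁ ^ γ - γ * ρ₁ ^ (γ - 1) * (ρ₂ - ρ₁)) * (∑ j, Du j j) +
        (ρ₂ / 2) * ∑ i : Fin 3, ∑ j : Fin 3,
          (u₂ i - u₁ i) * (u₂ j - u₁ j) * (Du j i + Du i j) := by
  simp only [eulerFlux_sub_sub_fderiv γ _ hρ₁,
    etaHess_gradient_of_fst_eq_zero γ hρ₁.ne', Fin.sum_univ_three, Fin.isValue, ↓reduceIte,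
    Fin.reduceEq, mul_one, mul_zero, add_zero]
  ring

/-- The key cancellation identity of the relative entropy method:
`Σⱼ D²η(U₁)(∂ⱼU₁, F_j(U₂) − F_j(U₁) − DF_j(U₁)(U₂ − U₁))
  = [p(ρ₂) − p(ρ₁) − p'(ρ₁)(ρ₂ − ρ₁)] div u₁
    + (ρ₂/2) Σᵢⱼ (u₂ⁱ − u₁ⁱ)(u₂ʲ − u₁ʲ)(∂ⱼu₁ⁱ + ∂ᵢu₁ʲ)`,
stated pointwise with `Dρ j = ∂ⱼρ₁`, `Du j i = ∂ⱼu₁ⁱ`, `m₁ = ρ₁u₁`, so that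
`∂ⱼU₁ = (∂ⱼρ₁, ρ₁∂ⱼu₁ + u₁∂ⱼρ₁)`. -/
theorem stmt19 (γ : ℝ) (hγ : 1 < γ) (ρ₁ ρ₂ : ℝ) (hρ₁ : 0 < ρ₁) (hρ₂ : 0 < ρ₂)
    (u₁ u₂ : Fin 3 → ℝ) (Dρ : Fin 3 → ℝ) (Du : Fin 3 → Fin 3 → ℝ) :
    (∑ j : Fin 3,
        etaHess γ ρ₁ (fun i => ρ₁ * u₁ i)
          ((Dρ j, fun i => ρ₁ * Du j i + u₁ i * Dρ j))
          (eulerFlux γ j (ρ₂, fun i => ρ₂ * u₂ i) -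
            eulerFlux γ j (ρ₁, fun i => ρ₁ * u₁ i) -
            fderiv ℝ (eulerFlux γ j) (ρ₁, fun i => ρ₁ * u₁ i)
              ((ρ₂, fun i => ρ₂ * u₂ i) - (ρ₁, fun i => ρ₁ * u₁ i)))) =
      (ρ₂ ^ γ - ρ₁ ^ γ - γ * ρ₁ ^ (γ - 1) * (ρ₂ - ρ₁)) * (∑ j, Du j j) +
        (ρ₂ / 2) * ∑ i : Fin 3, ∑ j : Fin 3,
          (u₂ i - u₁ i) * (u₂ j - u₁ j) * (Du j i + Du i j) :=
  stmt19_general γ ρ₁ ρ₂ hρ₁ u₁ u₂ Dρ Du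
end
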